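/- Merging repeated-guess POVM elements does not increase cost: let \{E_g\}_{g \in \mathcal{X}^K} be a POVM, c a non-decreasing cost vector, R_g = \sum_x p(x) c_{N(g,x)} \rho_B^x. Suppose h \in \mathcal{X}^K has repeated elements and h' \in \mathcal{X}^K agrees with h except that repetitions are replaced so that h' has distinct entries and every entry of h appears in h' no later than in h. Define \tilde{E}_{h'} = E_{h} + E_{h'}, \tilde{E}_h = 0, and \tilde{E}_g = E_g otherwise. Then \{\tilde{E}_g\} is a POVM and \sum_g \mathrm{tr}[R_g \tilde{E}_g] \leq \sum_g \mathrm{tr}[R_g E_g]. -/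

import Mathlib

/-!
Only the entries at `h` and `h'` change, so the total of the family is unchanged and the
expected cost drops by `tr[(R_h - R_{h'}) E_h]`. Since `h'` guesses every entry of `h` no
later, `c_{N(h',x)} ≤ c_{N(h,x)}`, so `R_h - R_{h'}` is a nonnegative combination of the
states and hence positive semidefinite; the trace of a product of two positive semidefinite
matrices is nonnegative.
-/

open Matrix ComplexOrder

variable {X : Type*} [Fintype X] [DecidableEq X] {K d : ℕ}

/-- The cost `c_{N(g,x)}` where `N(g,x) = min{j : g j = x}` is the first position of
`x` in the (possibly repeating) guessing sequence `g`, with cost `cinf` if `x` never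
appears. -/
noncomputable def seqCost (c : Fin K → ℝ) (cinf : ℝ) (g : Fin K → X) (x : X) : ℝ :=
  if h : (Finset.univ.filter fun j => g j = x).Nonempty
  then c ((Finset.univ.filter fun j => g j = x).min' h) else cinf

/-- The cost operator `R_g = ∑_x p(x) c_{N(g,x)} ρ_B^x`. -/
noncomputable def seqCostOp (c : Fin K → ℝ) (cinf : ℝ) (p : X → ℝ)
    (ρ : X → Matrix (Fin d) (Fin d) ℂ) (g : Fin K → X) : Matrix (Fin d) (Fin d) ℂ :=
  ∑ x, ((p x * seqCost c cinf g x : ℝ) : ℂ) • ρ x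

section Merge

variable {ι M N : Type*} [DecidableEq ι]

def mergeInto [AddCommMonoid M] (E : ι → M) (a b : ι) (g : ι) : M :=
  if g = a then 0 else if g = b then E a + E b else E g

lemma sum_map_mergeInto_sub [Fintype ι] [AddCommMonoid M] [AddCommGroup N]
    (φ : ι → M →+ N) (E : ι → M) {a b : ι} (hab : a ≠ b) :
    ∑ g, (φ g (mergeInto E a b g) - φ g (E g)) = φ b (E a) - φ a (E a) := by
  rw [Fintype.sum_eq_add a b hab fun g hg => by simp [mergeInto, hg.1, hg.2]]
  simp only [mergeInto, ↓reduceIte, map_zero, zero_sub, hab.symm, map_add, add_sub_cancel_right]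
  abel

lemma sum_mergeInto [Fintype ι] [AddCommGroup M] (E : ι → M) {a b : ι} (hab : a ≠ b) :
    ∑ g, mergeInto E a b g = ∑ g, E g := by
  simpa [sub_eq_zero] using sum_map_mergeInto_sub (fun _ => AddMonoidHom.id M) E hab

lemma posSemidef_mergeInto {n : Type*} [Fintype n] {E : ι → Matrix n n ℂ}
    (hE : ∀ g, (E g).PosSemidef) (a b g : ι) : (mergeInto E a b g).PosSemidef := by
  unfold mergeInto
  split_ifs
  exacts [.zero, (hE a).add (hE b), hE g]

end Merge

lemma Matrix.PosSemidef.trace_mul_nonneg {n : Type*} [Fintype n] {A B : Matrix n n ℂ}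
    (hA : A.PosSemidef) (hB : B.PosSemidef) : 0 ≤ (A * B).trace := by
  classical
  open MatrixOrder in
  obtain ⟨S, rfl⟩ := CStarAlgebra.nonneg_iff_eq_star_mul_self.mp hA.nonneg
  rw [star_eq_conjTranspose, mul_assoc, trace_mul_comm]
  simpa [mul_assoc] using (hB.mul_mul_conjTranspose_same S).trace_nonneg

lemma sum_trace_mul_mergeInto_le {ι n : Type*} [Fintype ι] [DecidableEq ι] [Fintype n]
    (R E : ι → Matrix n n ℂ) {a b : ι} (hab : a ≠ b) (hR : (R a - R b).PosSemidef)
    (hE : (E a).PosSemidef) :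
    ∑ g, (R g * mergeInto E a b g).trace ≤ ∑ g, (R g * E g).trace := by
  have hmerge := sum_map_mergeInto_sub
    (fun g => (traceAddMonoidHom n ℂ).comp (AddMonoidHom.mulLeft (R g))) E hab
  simp only [AddMonoidHom.comp_apply, AddMonoidHom.coe_mulLeft, traceAddMonoidHom_apply,
    Finset.sum_sub_distrib] at hmerge
  have hcost : ∑ g, (R g * mergeInto E a b g).trace
      = ∑ g, (R g * E g).trace - ((R a - R b) * E a).trace := by
    rw [sub_mul, trace_sub]
    linear_combination hmerge
  rw [hcost]
  exact sub_le_self _ (hR.trace_mul_nonneg hE)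

omit [Fintype X] in
lemma seqCost_le_seqCost_of_earlier {c : Fin K → ℝ} {cinf : ℝ}
    (hc : Monotone c) (hcinf : ∀ k, c k ≤ cinf) {h h' : Fin K → X}
    (hearly : ∀ (x : X) (j : Fin K), h j = x → ∃ j' ≤ j, h' j' = x) (x : X) :
    seqCost c cinf h' x ≤ seqCost c cinf h x := by
  unfold seqCost
  split_ifs with hne' hne hne
  · obtain ⟨j', hj'le, hj'x⟩ := hearly x _ (Finset.mem_filter.mp (Finset.min'_mem _ hne)).2
    exact hc ((Finset.min'_le _ j' (by simpa using hj'x)).trans hj'le)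
  · exact hcinf _
  · obtain ⟨j, hj⟩ := hne
    obtain ⟨j', -, hj'x⟩ := hearly x j (by simpa using hj)
    exact absurd ⟨j', by simpa using hj'x⟩ hne'
  · exact le_rfl

lemma posSemidef_seqCostOp_sub_of_earlier {c : Fin K → ℝ} {cinf : ℝ}
    (hc : Monotone c) (hcinf : ∀ k, c k ≤ cinf) {p : X → ℝ} (hp0 : ∀ x, 0 ≤ p x)
    {ρ : X → Matrix (Fin d) (Fin d) ℂ} (hρ : ∀ x, (ρ x).PosSemidef) {h h' : Fin K → X}
    (hearly : ∀ (x : X) (j : Fin K), h j = x → ∃ j' ≤ j, h' j' = x) :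
    (seqCostOp c cinf p ρ h - seqCostOp c cinf p ρ h').PosSemidef := by
  simp only [seqCostOp, ← Finset.sum_sub_distrib, ← sub_smul, ← Complex.ofReal_sub,
    ← mul_sub]
  refine Matrix.posSemidef_sum _ fun x _ => (hρ x).smul (Complex.zero_le_real.mpr ?_)
  exact mul_nonneg (hp0 x) (sub_nonneg.2 (seqCost_le_seqCost_of_earlier hc hcinf hearly x))

theorem merge_repeated_guesses_le_general (c : Fin K → ℝ) (cinf : ℝ)
    (hc : Monotone c) (hcinf : ∀ k, c k ≤ cinf)
    (p : X → ℝ) (hp0 : ∀ x, 0 ≤ p x)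
    (ρ : X → Matrix (Fin d) (Fin d) ℂ)
    (hρ : ∀ x, (ρ x).PosSemidef)
    (E : (Fin K → X) → Matrix (Fin d) (Fin d) ℂ)
    (hEpos : ∀ g, (E g).PosSemidef) (hEsum : ∑ g, E g = 1)
    (h h' : Fin K → X)
    (hrep : ¬ Function.Injective h) (hinj : Function.Injective h')
    (hearly : ∀ (x : X) (j : Fin K), h j = x → ∃ j' ≤ j, h' j' = x) :
    (∀ g, (if g = h then 0 else if g = h' then E h + E h' else E g).PosSemidef) ∧
      (∑ g : Fin K → X, (if g = h then 0 else if g = h' then E h + E h' else E g)) = 1 ∧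
      (∑ g : Fin K → X, (seqCostOp c cinf p ρ g *
          (if g = h then 0 else if g = h' then E h + E h' else E g)).trace).re ≤
        (∑ g : Fin K → X, (seqCostOp c cinf p ρ g * E g).trace).re := by
  have hne : h ≠ h' := fun e => hrep (e ▸ hinj)
  refine ⟨posSemidef_mergeInto hEpos h h', (sum_mergeInto E hne).trans hEsum, ?_⟩
  have hR := posSemidef_seqCostOp_sub_of_earlier hc hcinf hp0 hρ hearly
  exact (Complex.le_def.mp (sum_trace_mul_mergeInto_le _ E hne hR (hEpos h))).1

/-- Merging a repeated-guess POVM element into its repetition-free improvement does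
not increase the expected cost: the modified family `Ẽ` (with `Ẽ_h = 0`,
`Ẽ_{h'} = E_h + E_{h'}`) is again a POVM and has expected cost no larger than `E`. -/
theorem merge_repeated_guesses_le (c : Fin K → ℝ) (cinf : ℝ)
    (hc : Monotone c) (hcinf : ∀ k, c k ≤ cinf)
    (p : X → ℝ) (hp0 : ∀ x, 0 ≤ p x) (hp1 : ∑ x, p x = 1)
    (ρ : X → Matrix (Fin d) (Fin d) ℂ)
    (hρ : ∀ x, (ρ x).PosSemidef) (hρtr : ∀ x, (ρ x).trace = 1)
    (E : (Fin K → X) → Matrix (Fin d) (Fin d) ℂ)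
    (hEpos : ∀ g, (E g).PosSemidef) (hEsum : ∑ g, E g = 1)
    (h h' : Fin K → X)
    (hrep : ¬ Function.Injective h) (hinj : Function.Injective h')
    (hearly : ∀ (x : X) (j : Fin K), h j = x → ∃ j' ≤ j, h' j' = x) :
    (∀ g, (if g = h then 0 else if g = h' then E h + E h' else E g).PosSemidef) ∧
      (∑ g : Fin K → X, (if g = h then 0 else if g = h' then E h + E h' else E g)) = 1 ∧
      (∑ g : Fin K → X, (seqCostOp c cinf p ρ g *
          (if g = h then 0 else if g = h' then E h + E h' else E g)).trace).re ≤
        (∑ g : Fin K → X, (seqCostOp c cinf p ρ g * E g).trace).re :=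
  merge_repeated_guesses_le_general c cinf hc hcinf p hp0 ρ hρ E hEpos hEsum h h' hrep hinj hearly
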